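/- Let P and Q be orthogonal projections and σ a density matrix on ℂ^d, and let 0 ≤ ε ≤ 1. If tr(P σ) ≥ 1 − ε and tr(Q σ) ≥ 1 − ε, then |tr(P Q σ)| ≥ 1 − 2√ε. -/

import Mathlib

/-!
Write `tr(PQσ) = tr(Qσ) - tr((1 - P)Qσ)`. For `σ ≥ 0`, `⟪A, B⟫ = tr(Aᴴ B σ)` is a semi-inner
product on matrices, and for a projection `R` one has `⟪R, R⟫ = tr(Rσ)`. Cauchy–Schwarz therefore
bounds `|tr((1 - P)Qσ)|²` by `tr((1 - P)σ) · tr(Qσ) ≤ ε · 1`, so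
`|tr(PQσ)| ≥ tr(Qσ) - √ε ≥ 1 - ε - √ε ≥ 1 - 2√ε`.
-/

open scoped ComplexOrder Matrix

namespace Matrix

variable {𝕜 n : Type*} [RCLike 𝕜] [Fintype n] {σ : Matrix n n 𝕜}

theorem PosSemidef.norm_trace_conjTranspose_mul_mul_sq_le (hσ : σ.PosSemidef)
    (A B : Matrix n n 𝕜) :
    ‖(Aᴴ * B * σ).trace‖ ^ 2 ≤
      RCLike.re (Aᴴ * A * σ).trace * RCLike.re (Bᴴ * B * σ).trace := by
  let := σ.toMatrixSeminormedAddCommGroup hσ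
  let := σ.toMatrixInnerProductSpace hσ
  have inner_eq (X Y : Matrix n n 𝕜) : inner 𝕜 X Y = (Xᴴ * Y * σ).trace :=
    trace_mul_cycle Y σ Xᴴ
  have := inner_mul_inner_self_le (𝕜 := 𝕜) A B
  rwa [norm_inner_symm B A, ← sq, inner_eq, inner_eq, inner_eq] at this

theorem PosSemidef.re_trace_conjTranspose_mul_self_mul_nonneg (hσ : σ.PosSemidef)
    (A : Matrix n n 𝕜) : 0 ≤ RCLike.re (Aᴴ * A * σ).trace := by
  rw [Matrix.mul_assoc, trace_mul_comm]
  exact RCLike.nonneg_iff.mp (hσ.mul_mul_conjTranspose_same A).trace_nonneg |>.1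

section IsStarProjection

variable {P Q : Matrix n n 𝕜}

theorem conjTranspose_eq_self_of_isStarProjection (hP : IsStarProjection P) : Pᴴ = P :=
  hP.isSelfAdjoint.star_eq

theorem conjTranspose_mul_self_of_isStarProjection (hP : IsStarProjection P) : Pᴴ * P = P := by
  rw [conjTranspose_eq_self_of_isStarProjection hP, hP.isIdempotentElem.eq]

theorem PosSemidef.re_trace_mul_nonneg_of_isStarProjection (hσ : σ.PosSemidef)
    (hP : IsStarProjection P) : 0 ≤ RCLike.re (P * σ).trace := by
  simpa only [conjTranspose_mul_self_of_isStarProjection hP]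
    using hσ.re_trace_conjTranspose_mul_self_mul_nonneg P

theorem PosSemidef.re_trace_mul_le_of_isStarProjection [DecidableEq n] (hσ : σ.PosSemidef)
    (hP : IsStarProjection P) : RCLike.re (P * σ).trace ≤ RCLike.re σ.trace := by
  have := hσ.re_trace_mul_nonneg_of_isStarProjection hP.one_sub
  rw [Matrix.sub_mul, Matrix.one_mul, trace_sub, map_sub] at this
  linarith

theorem PosSemidef.norm_trace_mul_mul_sq_le_of_isStarProjection (hσ : σ.PosSemidef)
    (hP : IsStarProjection P) (hQ : IsStarProjection Q) :
    ‖(P * Q * σ).trace‖ ^ 2 ≤ RCLike.re (P * σ).trace * RCLike.re (Q * σ).trace := by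
  have := hσ.norm_trace_conjTranspose_mul_mul_sq_le P Q
  rwa [conjTranspose_mul_self_of_isStarProjection hP, conjTranspose_mul_self_of_isStarProjection hQ,
    conjTranspose_eq_self_of_isStarProjection hP] at this

end IsStarProjection

end Matrix

/-- If `tr(P σ) ≥ 1 − ε` and `tr(Q σ) ≥ 1 − ε` for orthogonal projections `P`, `Q` and a
density matrix `σ` on `ℂ^d`, then `|tr(P Q σ)| ≥ 1 − 2√ε`. -/
theorem abs_trace_proj_proj_ge_of_trace_ge (d : ℕ) (P Q σ : Matrix (Fin d) (Fin d) ℂ)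
    (hP : P.IsHermitian) (hP2 : P * P = P)
    (hQ : Q.IsHermitian) (hQ2 : Q * Q = Q)
    (hσ : σ.PosSemidef) (htr : σ.trace = 1)
    (ε : ℝ) (hε0 : 0 ≤ ε) (hε1 : ε ≤ 1)
    (hPσ : ((P * σ).trace).re ≥ 1 - ε) (hQσ : ((Q * σ).trace).re ≥ 1 - ε) :
    ‖(P * Q * σ).trace‖ ≥ 1 - 2 * Real.sqrt ε := by
  have hP' : IsStarProjection P := ⟨hP2, hP⟩
  have hR : IsStarProjection (1 - P) := hP'.one_sub
  have hQ' : IsStarProjection Q := ⟨hQ2, hQ⟩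
  have hRσ : ((1 - P) * σ).trace.re ≤ ε := by
    rw [Matrix.sub_mul, Matrix.one_mul, Matrix.trace_sub, Complex.sub_re, htr, Complex.one_re]
    linarith
  have hQσ1 : (Q * σ).trace.re ≤ 1 := by
    simpa [htr] using hσ.re_trace_mul_le_of_isStarProjection hQ'
  have hRQ : ‖((1 - P) * Q * σ).trace‖ ≤ √ε := by
    refine (Real.le_sqrt (norm_nonneg _) hε0).mpr ?_
    calc ‖((1 - P) * Q * σ).trace‖ ^ 2
        ≤ ((1 - P) * σ).trace.re * (Q * σ).trace.re :=
          hσ.norm_trace_mul_mul_sq_le_of_isStarProjection hR hQ'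
      _ ≤ ε * 1 := mul_le_mul hRσ hQσ1 (hσ.re_trace_mul_nonneg_of_isStarProjection hQ') hε0
      _ = ε := mul_one ε
  have hε : ε ≤ √ε := (Real.le_sqrt hε0 hε0).mpr (by nlinarith)
  have hsplit : (P * Q * σ).trace = (Q * σ).trace - ((1 - P) * Q * σ).trace := by
    rw [Matrix.sub_mul, Matrix.sub_mul, Matrix.one_mul, Matrix.trace_sub, sub_sub_cancel]
  calc 1 - 2 * √ε ≤ (Q * σ).trace.re - ‖((1 - P) * Q * σ).trace‖ := by linarith
    _ ≤ ‖(Q * σ).trace‖ - ‖((1 - P) * Q * σ).trace‖ := by gcongr; exact Complex.re_le_norm _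
    _ ≤ ‖(P * Q * σ).trace‖ := hsplit ▸ norm_sub_norm_le _ _
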